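/- Let (Λ, dx) be a measure space with 0 < |Λ| < ∞, N ≥ 2, and P an essentially bounded symmetric probability density on Λ^N. For n ∈ ℕ set Q_n = max{P, 1/n} and P_n = Q_n / ‖Q_n‖_{L^1(Λ^N)}. Then each P_n is a symmetric probability density satisfying: there exists α_n > 0 such that for every x_N ∈ Λ, P_n(·, x_N) ≥ α_n ρ_n^{(N−1)}(·) a.e. on Λ^{N−1} (where ρ_n^{(N−1)} is the (N−1)-marginal of P_n); and P_n → P in L^∞(Λ^N; d^N x) (and hence in L^1). -/

import Mathlib

/-!
Write `Iₙ = ∫ Qₙ`. Since `Qₙ ≥ 1/n`, `Pₙ ≥ 1/(n Iₙ)` everywhere, while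
`Pₙ ≤ max(‖P‖_∞, 1/n)/Iₙ` a.e., so every marginal of `Pₙ` is a.e. at most that bound times
`|Λ|^{N-k}`; the ratio of the two bounds gives `αₙ`. Since `1 ≤ Iₙ ≤ 1 + |Λ|^N/n`, also
`|Pₙ - P| ≤ (1 + |Λ|^N ‖P‖_∞)/n` a.e., whence convergence in every `Lᵖ`, the measure being finite.
-/

open MeasureTheory Filter
open scoped NNReal ENNReal

/-- The `k`-variable marginal `ρ^{(k)}` of a density `P` on `Λ^N`. -/
noncomputable def marg {Λ : Type*} [MeasurableSpace Λ] (μ : Measure Λ) (N k : ℕ)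
    (hk : k ≤ N) (P : (Fin N → Λ) → ℝ) : (Fin k → Λ) → ℝ :=
  fun y => ∫ z : Fin (N - k) → Λ,
    P (fun i => Fin.append y z (Fin.cast (by omega) i)) ∂(Measure.pi fun _ => μ)

open Topology

section Marginal

variable {Λ : Type*} [MeasurableSpace Λ] (μ : Measure Λ)

theorem measurePreserving_finAppend [SigmaFinite μ] {k m N : ℕ} (h : N = k + m) :
    MeasurePreserving
      (fun p : (Fin k → Λ) × (Fin m → Λ) => fun i : Fin N => Fin.append p.1 p.2 (Fin.cast h i))
      ((Measure.pi fun _ : Fin k => μ).prod (Measure.pi fun _ : Fin m => μ))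
      (Measure.pi fun _ : Fin N => μ) := by
  subst h
  convert (measurePreserving_piCongrLeft (fun _ => μ) finSumFinEquiv).comp
    (measurePreserving_sumPiEquivProdPi_symm fun _ : Fin k ⊕ Fin m => μ) using 1
  ext ⟨f, g⟩ i
  refine Fin.addCases (fun l => ?_) (fun l => ?_) i
  · simpa [MeasurableEquiv.coe_piCongrLeft, MeasurableEquiv.coe_sumPiEquivProdPi_symm] using
      (Equiv.piCongrLeft_sumInl (fun _ => Λ) finSumFinEquiv f g l).symm
  · simpa [MeasurableEquiv.coe_piCongrLeft, MeasurableEquiv.coe_sumPiEquivProdPi_symm] using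
      (Equiv.piCongrLeft_sumInr (fun _ => Λ) finSumFinEquiv f g l).symm

instance MeasureTheory.Measure.pi.instNeZero {ι : Type*} [Fintype ι] [SigmaFinite μ] [NeZero μ] :
    NeZero (Measure.pi fun _ : ι => μ) :=
  ⟨by
    rw [← Measure.measure_univ_ne_zero, Measure.pi_univ]
    exact Finset.prod_ne_zero_iff.2 fun _ _ => by simpa using NeZero.ne μ⟩

theorem ae_marg_le [IsFiniteMeasure μ] {N k : ℕ} (hk : k ≤ N) {f : (Fin N → Λ) → ℝ} {M : ℝ}
    (hf : ∀ᵐ x ∂(Measure.pi fun _ : Fin N => μ), ‖f x‖ ≤ M) :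
    ∀ᵐ y ∂(Measure.pi fun _ : Fin k => μ),
      marg μ N k hk f y ≤ M * (Measure.pi fun _ : Fin (N - k) => μ).real Set.univ := by
  have hf' := Measure.ae_ae_of_ae_prod <|
    (measurePreserving_finAppend μ (by omega : N = k + (N - k))).quasiMeasurePreserving.ae hf
  filter_upwards [hf'] with y hy
  exact (le_abs_self _).trans <| norm_integral_le_of_norm_le_const hy

theorem exists_pos_mul_marg_le [IsFiniteMeasure μ] [NeZero μ] {N k : ℕ} (hk : k ≤ N)
    {f : (Fin N → Λ) → ℝ} {m M : ℝ} (hm : 0 < m) (hfm : ∀ x, m ≤ f x)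
    (hfM : ∀ᵐ x ∂(Measure.pi fun _ : Fin N => μ), f x ≤ M) :
    ∃ α : ℝ, 0 < α ∧ ∀ᵐ y ∂(Measure.pi fun _ : Fin k => μ), ∀ x, α * marg μ N k hk f y ≤ f x := by
  set V := (Measure.pi fun _ : Fin (N - k) => μ).real Set.univ
  have hV : 0 < V := measureReal_univ_pos
  have hM : 0 < M := by
    obtain ⟨x, hx⟩ := hfM.exists
    exact hm.trans_le ((hfm x).trans hx)
  have hfM' : ∀ᵐ x ∂(Measure.pi fun _ : Fin N => μ), ‖f x‖ ≤ M := by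
    filter_upwards [hfM] with x hx
    rwa [Real.norm_of_nonneg (hm.le.trans (hfm x))]
  refine ⟨m / (M * V), by positivity, ?_⟩
  filter_upwards [ae_marg_le μ hk hfM'] with y hy x
  calc m / (M * V) * marg μ N k hk f y ≤ m / (M * V) * (M * V) := by gcongr
    _ = m := div_mul_cancel₀ m (by positivity)
    _ ≤ f x := hfm x

end Marginal

section Truncation

variable {α : Type*} [MeasurableSpace α] {ν : Measure α} [IsFiniteMeasure ν] {P : α → ℝ}

theorem integral_le_integral_max (hP : Integrable P ν) (c : ℝ) :
    ∫ x, P x ∂ν ≤ ∫ x, max (P x) c ∂ν :=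
  integral_mono hP (hP.sup (integrable_const c)) fun _ => le_max_left _ _

theorem integral_max_le (hP : Integrable P ν) (hP0 : ∀ x, 0 ≤ P x) {c : ℝ} (hc : 0 ≤ c) :
    ∫ x, max (P x) c ∂ν ≤ ∫ x, P x ∂ν + c * ν.real Set.univ := by
  calc ∫ x, max (P x) c ∂ν ≤ ∫ x, P x + c ∂ν :=
        integral_mono (hP.sup (integrable_const c)) (hP.add (integrable_const c))
          fun x => max_le (le_add_of_nonneg_right hc) (le_add_of_nonneg_left (hP0 x))
    _ = ∫ x, P x ∂ν + c * ν.real Set.univ := by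
        rw [integral_add hP (integrable_const c), integral_const, smul_eq_mul, mul_comm]

theorem abs_max_div_sub_le {p c C I V : ℝ} (hp : 0 ≤ p) (hpC : p ≤ C) (hc : 0 ≤ c)
    (hI : 1 ≤ I) (hIV : I ≤ 1 + c * V) : |max p c / I - p| ≤ c * (1 + V * C) := by
  have hVC : 0 ≤ c * V * C := mul_nonneg (by linarith) (hp.trans hpC)
  have hmax : max p c ≤ p + c := max_le (by linarith) (by linarith)
  have hdiv : max p c / I ≤ max p c := div_le_self (hp.trans (le_max_left p c)) hI
  have hpI : p ≤ p / I + p * (I - 1) := by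
    rw [div_add' _ _ _ (by positivity), le_div_iff₀ (by positivity)]
    nlinarith [mul_nonneg hp (sq_nonneg (I - 1))]
  have hpmax : p / I ≤ max p c / I := by gcongr; exact le_max_left p c
  rw [abs_le]
  constructor <;>
    nlinarith [mul_le_mul hpC (by linarith : I - 1 ≤ c * V) (by linarith) (hp.trans hpC)]

theorem ae_abs_max_div_integral_sub_le (hP : Integrable P ν) (hP0 : ∀ x, 0 ≤ P x)
    (hP1 : ∫ x, P x ∂ν = 1) {C : ℝ} (hPC : ∀ᵐ x ∂ν, P x ≤ C) {c : ℝ} (hc : 0 ≤ c) :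
    ∀ᵐ x ∂ν, |max (P x) c / ∫ y, max (P y) c ∂ν - P x| ≤ c * (1 + ν.real Set.univ * C) := by
  have hI := hP1 ▸ integral_le_integral_max hP c
  have hIV := hP1 ▸ integral_max_le hP hP0 hc
  filter_upwards [hPC] with x hx using abs_max_div_sub_le (hP0 x) hx hc hI hIV

theorem tendsto_eLpNorm_of_ae_norm_le {ι E : Type*} [NormedAddCommGroup E] {l : Filter ι}
    {f : ι → α → E} {b : ι → ℝ} (hb : Tendsto b l (𝓝 0))
    (hfb : ∀ᶠ i in l, ∀ᵐ x ∂ν, ‖f i x‖ ≤ b i) (p : ℝ≥0∞) :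
    Tendsto (fun i => eLpNorm (f i) p ν) l (𝓝 0) := by
  have hlim : Tendsto (fun i => ν Set.univ ^ p.toReal⁻¹ * ENNReal.ofReal (b i)) l (𝓝 0) := by
    simpa using ENNReal.Tendsto.const_mul (ENNReal.tendsto_ofReal hb)
      (Or.inr (ENNReal.rpow_ne_top_of_nonneg (by positivity) (measure_ne_top ν _)))
  refine tendsto_of_tendsto_of_tendsto_of_le_of_le' tendsto_const_nhds hlim
    (Eventually.of_forall fun _ => zero_le) ?_
  filter_upwards [hfb] with i hi using eLpNorm_le_of_ae_bound hi

end Truncation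

/-- **Theorem 4.** Let `0 < |Λ| < ∞` and `P` an essentially bounded symmetric
probability density on `Λ^N`.  With `Qₙ = max{P, 1/n}` and `Pₙ = Qₙ / ‖Qₙ‖₁`, each `Pₙ`
(`n ≥ 1`) is a symmetric probability density satisfying the lower-bound condition
`Pₙ(·,x_N) ≥ αₙ ρₙ^{(N−1)}` a.e. for some `αₙ > 0` and all `x_N ∈ Λ`, and `Pₙ → P` in
`L^∞(Λ^N; d^N x)` and in `L^1(Λ^N; d^N x)`. -/
theorem perturbed_density_satisfies_condition
    {Λ : Type*} [MeasurableSpace Λ] (μ : Measure Λ)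
    (hμ0 : μ Set.univ ≠ 0) (hμfin : μ Set.univ ≠ ⊤)
    (N : ℕ) (hN : 2 ≤ N) (P : (Fin N → Λ) → ℝ)
    (hPnn : ∀ x, 0 ≤ P x)
    (hPsym : ∀ σ : Equiv.Perm (Fin N), ∀ x, P (x ∘ σ) = P x)
    (hPint : ∫ x, P x ∂(Measure.pi fun _ : Fin N => μ) = 1)
    (hPbdd : MemLp P ⊤ (Measure.pi fun _ : Fin N => μ))
    (Pn : ℕ → (Fin N → Λ) → ℝ)
    (hPn : ∀ n x, Pn n x =
      max (P x) ((n : ℝ)⁻¹) /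
        ∫ y, max (P y) ((n : ℝ)⁻¹) ∂(Measure.pi fun _ : Fin N => μ)) :
    (∀ n : ℕ, 1 ≤ n →
      (∀ x, 0 ≤ Pn n x) ∧
      (∀ σ : Equiv.Perm (Fin N), ∀ x, Pn n (x ∘ σ) = Pn n x) ∧
      (∫ x, Pn n x ∂(Measure.pi fun _ : Fin N => μ) = 1) ∧
      ∃ α : ℝ, 0 < α ∧ ∀ a : Λ,
        ∀ᵐ y ∂(Measure.pi fun _ : Fin (N - 1) => μ),
          α * marg μ N (N - 1) (by omega) (Pn n) y ≤
            Pn n (fun i : Fin N =>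
              (Fin.snoc y a : Fin (N - 1 + 1) → Λ)
                (Fin.cast (show N = N - 1 + 1 by omega) i))) ∧
    Tendsto (fun n => eLpNorm (fun x => Pn n x - P x) ⊤ (Measure.pi fun _ : Fin N => μ))
      atTop (nhds 0) ∧
    Tendsto (fun n => eLpNorm (fun x => Pn n x - P x) 1 (Measure.pi fun _ : Fin N => μ))
      atTop (nhds 0) := by
  have : IsFiniteMeasure μ := ⟨hμfin.lt_top⟩
  have : NeZero μ := ⟨Measure.measure_univ_ne_zero.mp hμ0⟩
  set ν := Measure.pi fun _ : Fin N => μ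
  have hP : Integrable P ν := hPbdd.integrable le_top
  set C := lpNorm P ⊤ ν
  have hPC : ∀ᵐ x ∂ν, P x ≤ C :=
    (ae_le_lpNorm_exponent_top hPbdd).mono fun x hx => (le_abs_self _).trans hx
  have hclose : ∀ n : ℕ, ∀ᵐ x ∂ν, ‖Pn n x - P x‖ ≤ (n : ℝ)⁻¹ * (1 + ν.real Set.univ * C) :=
    fun n => by
      simpa only [hPn, Real.norm_eq_abs]
        using ae_abs_max_div_integral_sub_le hP hPnn hPint hPC (c := (n : ℝ)⁻¹) (by positivity)
  have hlim : Tendsto (fun n : ℕ => (n : ℝ)⁻¹ * (1 + ν.real Set.univ * C)) atTop (nhds 0) := by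
    simpa using (tendsto_inv_atTop_nhds_zero_nat (𝕜 := ℝ)).mul_const (1 + ν.real Set.univ * C)
  refine ⟨fun n hn => ?_, tendsto_eLpNorm_of_ae_norm_le hlim (.of_forall hclose) _,
    tendsto_eLpNorm_of_ae_norm_le hlim (.of_forall hclose) _⟩
  set I := ∫ y, max (P y) ((n : ℝ)⁻¹) ∂ν
  have hI : 0 < I := one_pos.trans_le (hPint ▸ integral_le_integral_max hP _)
  have hlower : ∀ x, (n : ℝ)⁻¹ / I ≤ Pn n x := fun x => by
    rw [hPn]; gcongr; exact le_max_right _ _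
  have hupper : ∀ᵐ x ∂ν, Pn n x ≤ max C (n : ℝ)⁻¹ / I := by
    filter_upwards [hPC] with x hx; rw [hPn]; gcongr
  obtain ⟨α, hα, hmarg⟩ :=
    exists_pos_mul_marg_le μ (by omega : N - 1 ≤ N) (by positivity) hlower hupper
  refine ⟨fun x => le_trans (by positivity) (hlower x), fun σ x => by rw [hPn, hPn, hPsym], ?_,
    α, hα, fun a => hmarg.mono fun y hy => hy _⟩
  simp only [hPn]
  rw [integral_div, div_self hI.ne']
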